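/- arXiv:1801.00261 — 4 statements merged into one kernel-verified Lean document; each statement's English description precedes it below -/
import Mathlib

section
/- Let S be a nonempty closed convex subset of R^m and Π_S the metric projection onto S. Then for all u, v, w in R^m: 2⟨Π_S(w+u) − Π_S(w+v), u⟩ ≤ ‖u−v‖² + ‖Π_S(w+u) − w‖² − ‖Π_S(w+v) − w‖². -/
open scoped RealInnerProductSpace

/-- `P` is the metric projection onto `S`. -/
def IsProjOn {E : Type*} [NormedAddCommGroup E] (S : Set E) (P : E → E) : Prop :=
  ∀ x, P x ∈ S ∧ ∀ y ∈ S, ‖x - P x‖ ≤ ‖x - y‖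

/-!
Write `a = P (w + u)` and `b = P (w + v)`. Expanding the squares,
`2⟪a - b, u⟫ - ‖a - w‖² + ‖b - w‖² = 2⟪w + v - b, a - b⟫ + ‖u - v‖² - ‖(u - v) - (a - b)‖²`,
and the first term on the right is nonpositive by the variational inequality characterising
`b` as the projection of `w + v` onto the convex set `S`, tested at `a ∈ S`.
-/

section

variable {F : Type*} [NormedAddCommGroup F] [InnerProductSpace ℝ F]

lemma two_inner_sub_sub_norm_sq_sub_eq (a b u v w : F) :
    2 * ⟪a - b, u⟫ - (‖a - w‖ ^ 2 - ‖b - w‖ ^ 2) =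
      2 * ⟪w + v - b, a - b⟫ + ‖u - v‖ ^ 2 - ‖(u - v) - (a - b)‖ ^ 2 := by
  simp only [← real_inner_self_eq_norm_sq, inner_sub_left, inner_sub_right, inner_add_left,
    real_inner_comm]
  ring

lemma IsProjOn.inner_sub_le_zero {S : Set F} (hS : Convex ℝ S) {P : F → F}
    (hP : IsProjOn S P) (x : F) {y : F} (hy : y ∈ S) : ⟪x - P x, y - P x⟫ ≤ 0 := by
  have : Nonempty S := ⟨⟨P x, (hP x).1⟩⟩
  have hmin : IsLeast (Set.range fun z : S => ‖x - z‖) ‖x - P x‖ :=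
    ⟨⟨⟨P x, (hP x).1⟩, rfl⟩, by rintro _ ⟨z, rfl⟩; exact (hP x).2 z z.2⟩
  exact (norm_eq_iInf_iff_real_inner_le_zero hS (hP x).1).mp hmin.isGLB.ciInf_eq.symm y hy

theorem IsProjOn.two_inner_sub_le {S : Set F} (hS : Convex ℝ S) {P : F → F}
    (hP : IsProjOn S P) (u v w : F) :
    2 * ⟪P (w + u) - P (w + v), u⟫ ≤
      ‖u - v‖ ^ 2 + ‖P (w + u) - w‖ ^ 2 - ‖P (w + v) - w‖ ^ 2 := by
  have hvar : ⟪w + v - P (w + v), P (w + u) - P (w + v)⟫ ≤ 0 :=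
    hP.inner_sub_le_zero hS (w + v) (hP (w + u)).1
  have hid := two_inner_sub_sub_norm_sq_sub_eq (P (w + u)) (P (w + v)) u v w
  linarith [sq_nonneg ‖(u - v) - (P (w + u) - P (w + v))‖]

end

theorem stmt0_general {m : ℕ} (S : Set (EuclideanSpace ℝ (Fin m)))
    (hSconv : Convex ℝ S)
    (P : EuclideanSpace ℝ (Fin m) → EuclideanSpace ℝ (Fin m)) (hP : IsProjOn S P)
    (u v w : EuclideanSpace ℝ (Fin m)) :
    2 * ⟪P (w + u) - P (w + v), u⟫ ≤
      ‖u - v‖ ^ 2 + ‖P (w + u) - w‖ ^ 2 - ‖P (w + v) - w‖ ^ 2 :=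
  hP.two_inner_sub_le hSconv u v w

theorem stmt0 {m : ℕ} (S : Set (EuclideanSpace ℝ (Fin m))) (hSne : S.Nonempty)
    (hSclosed : IsClosed S) (hSconv : Convex ℝ S)
    (P : EuclideanSpace ℝ (Fin m) → EuclideanSpace ℝ (Fin m)) (hP : IsProjOn S P)
    (u v w : EuclideanSpace ℝ (Fin m)) :
    2 * ⟪P (w + u) - P (w + v), u⟫ ≤
      ‖u - v‖ ^ 2 + ‖P (w + u) - w‖ ^ 2 - ‖P (w + v) - w‖ ^ 2 :=
  stmt0_general S hSconv P hP u v w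
end

section
/- Let C be a nonempty closed convex cone in R^m, p ∈ R^m, θ ∈ R^m, and γ > 0. Then min over ξ ∈ −C of [⟨p, θ−ξ⟩ + (γ/2)‖θ−ξ‖²] equals max over q ∈ C* of [⟨q, θ⟩ − ‖q−p‖²/(2γ)], and both equal (‖Π(p+γθ)‖² − ‖p‖²)/(2γ), where Π is the projection onto the dual cone C*. -/
open scoped RealInnerProductSpace

/-- The dual cone `C* = {y : ⟨x, y⟩ ≥ 0 for all x ∈ C}`. -/
def dualCone' {E : Type*} [NormedAddCommGroup E] [InnerProductSpace ℝ E] (C : Set E) : Set E :=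
  {y | ∀ x ∈ C, 0 ≤ ⟪x, y⟫}

/-!
Put `z = p + γ • θ`, `u = Π z` and `v = z - u`. Since `C*` is a convex cone, the variational
inequality of the projection gives `⟪v, u⟫ = 0` and `⟪v, y⟫ ≤ 0` on `C*`, so `-v ∈ C** = C`.
Completing the square, the primal objective at `ξ` is `(‖z - γ ξ‖² - ‖p‖²) / (2γ)` and the dual
objective at `q` is `(‖z‖² - ‖p‖² - ‖z - q‖²) / (2γ)`. The dual one is maximised at `q = u`,
with value `(‖u‖² - ‖p‖²) / (2γ)` because `‖z‖² = ‖u‖² + ‖v‖²`. The primal one is minimised at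
`ξ = v / γ ∈ -C`, because `‖z + c‖² = ‖u‖² + 2⟪c, u⟫ + ‖v + c‖² ≥ ‖u‖²` for `c ∈ C`.
-/

variable {E : Type*} [NormedAddCommGroup E] [InnerProductSpace ℝ E]

section DualCone

variable {C : Set E}

lemma add_mem_dualCone' {y z : E} (hy : y ∈ dualCone' C) (hz : z ∈ dualCone' C) :
    y + z ∈ dualCone' C := fun x hx => by
  rw [inner_add_right]
  exact add_nonneg (hy x hx) (hz x hx)

lemma smul_mem_dualCone' {a : ℝ} {y : E} (ha : 0 ≤ a) (hy : y ∈ dualCone' C) :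
    a • y ∈ dualCone' C := fun x hx => by
  rw [real_inner_smul_right]
  exact mul_nonneg ha (hy x hx)

lemma convex_dualCone' : Convex ℝ (dualCone' C) :=
  fun _ hy _ hz _ _ ha hb _ =>
    add_mem_dualCone' (smul_mem_dualCone' ha hy) (smul_mem_dualCone' hb hz)

lemma Convex.add_mem_of_smul_mem (hconv : Convex ℝ C)
    (hcone : ∀ x ∈ C, ∀ a : ℝ, 0 ≤ a → a • x ∈ C) {x y : E} (hx : x ∈ C) (hy : y ∈ C) :
    x + y ∈ C := by
  have hmid := hconv hx hy (by norm_num : (0 : ℝ) ≤ 1 / 2) (by norm_num : (0 : ℝ) ≤ 1 / 2)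
    (by norm_num)
  simpa [smul_add, smul_smul] using hcone _ hmid 2 zero_le_two

/-- The bipolar theorem, in the direction `C** ⊆ C`. -/
theorem mem_of_forall_mem_dualCone'_inner_nonneg [CompleteSpace E] (hne : C.Nonempty)
    (hclosed : IsClosed C) (hconv : Convex ℝ C)
    (hcone : ∀ x ∈ C, ∀ a : ℝ, 0 ≤ a → a • x ∈ C) {x : E}
    (h : ∀ y ∈ dualCone' C, 0 ≤ ⟪x, y⟫) : x ∈ C := by
  obtain ⟨c, hc⟩ := hne
  let K : ProperCone ℝ E :=
    { carrier := C
      add_mem' := hconv.add_mem_of_smul_mem hcone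
      zero_mem' := by simpa using hcone c hc 0 le_rfl
      smul_mem' := fun a _ hy => hcone _ hy a a.2
      isClosed' := hclosed }
  by_contra hx
  obtain ⟨y, hy, hxy⟩ := ProperCone.hyperplane_separation' K hx
  exact (h y hy).not_gt hxy

end DualCone

namespace IsProjOn

variable {S C : Set E} {P : E → E}

lemma inner_sub_le_zero_s2 (hS : Convex ℝ S) (hP : IsProjOn S P) (x : E) {y : E} (hy : y ∈ S) :
    ⟪x - P x, y - P x⟫ ≤ 0 := by
  have hx := (hP x).1
  have : Nonempty S := ⟨⟨P x, hx⟩⟩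
  refine (norm_eq_iInf_iff_real_inner_le_zero hS hx).1 ?_ y hy
  exact le_antisymm (le_ciInf fun w => (hP x).2 w w.2)
    (ciInf_le (f := fun w : S => ‖x - w‖) ⟨0, by rintro _ ⟨w, rfl⟩; positivity⟩ ⟨P x, hx⟩)

lemma inner_sub_proj_eq_zero (hP : IsProjOn (dualCone' C) P) (x : E) :
    ⟪x - P x, P x⟫ = 0 := by
  have hx := (hP x).1
  have h₂ := hP.inner_sub_le_zero_s2 convex_dualCone' x (smul_mem_dualCone' zero_le_two hx)
  have h₀ := hP.inner_sub_le_zero_s2 convex_dualCone' x (y := 0) fun _ _ => by simp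
  rw [two_smul, add_sub_cancel_right] at h₂
  rw [zero_sub, inner_neg_right] at h₀
  linarith

lemma inner_sub_proj_nonpos (hP : IsProjOn (dualCone' C) P) (x : E) {y : E}
    (hy : y ∈ dualCone' C) : ⟪x - P x, y⟫ ≤ 0 := by
  simpa using hP.inner_sub_le_zero_s2 convex_dualCone' x (add_mem_dualCone' hy (hP x).1)

lemma norm_sq_eq (hP : IsProjOn (dualCone' C) P) (x : E) :
    ‖x‖ ^ 2 = ‖P x‖ ^ 2 + ‖x - P x‖ ^ 2 := by
  conv_lhs => rw [← add_sub_cancel (P x) x]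
  rw [norm_add_sq_real, real_inner_comm, hP.inner_sub_proj_eq_zero]
  ring

/-- `x - P x` is the nearest point of `-C` to `x` (Moreau decomposition). -/
lemma norm_proj_le_norm_add (hP : IsProjOn (dualCone' C) P) (x : E) {c : E} (hc : c ∈ C) :
    ‖P x‖ ≤ ‖x + c‖ := by
  have horth := hP.inner_sub_proj_eq_zero x
  have hpos : 0 ≤ ⟪c, P x⟫ := (hP x).1 c hc
  have hsq : ‖x + c‖ ^ 2 = ‖P x‖ ^ 2 + 2 * ⟪c, P x⟫ + ‖x - P x + c‖ ^ 2 := by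
    conv_lhs => rw [← add_sub_cancel (P x) x, add_assoc]
    rw [norm_add_sq_real, inner_add_right, real_inner_comm (x - P x), horth,
      real_inner_comm]
    ring
  refine (sq_le_sq₀ (norm_nonneg _) (norm_nonneg _)).1 ?_
  rw [hsq]
  nlinarith [sq_nonneg ‖x - P x + c‖]

lemma proj_sub_mem [CompleteSpace E] (hne : C.Nonempty) (hclosed : IsClosed C)
    (hconv : Convex ℝ C) (hcone : ∀ x ∈ C, ∀ a : ℝ, 0 ≤ a → a • x ∈ C)
    (hP : IsProjOn (dualCone' C) P) (x : E) : P x - x ∈ C :=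
  mem_of_forall_mem_dualCone'_inner_nonneg hne hclosed hconv hcone fun y hy => by
    rw [← neg_sub, inner_neg_left]
    linarith [hP.inner_sub_proj_nonpos x hy]

end IsProjOn

section Objectives

variable {γ : ℝ} {C : Set E} {P : E → E}

lemma inner_add_half_mul_norm_sq_eq (hγ : γ ≠ 0) (p d : E) :
    ⟪p, d⟫ + γ / 2 * ‖d‖ ^ 2 = (‖p + γ • d‖ ^ 2 - ‖p‖ ^ 2) / (2 * γ) := by
  rw [norm_add_sq_real, norm_smul, real_inner_smul_right, Real.norm_eq_abs, mul_pow, sq_abs]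
  field_simp
  ring

lemma inner_sub_norm_sq_div_eq (hγ : γ ≠ 0) (p q θ : E) :
    ⟪q, θ⟫ - ‖q - p‖ ^ 2 / (2 * γ) =
      (‖p + γ • θ‖ ^ 2 - ‖p‖ ^ 2 - ‖p + γ • θ - q‖ ^ 2) / (2 * γ) := by
  simp only [← real_inner_self_eq_norm_sq, inner_sub_left, inner_sub_right, inner_add_left,
    inner_add_right, real_inner_smul_left, real_inner_smul_right, real_inner_comm p θ,
    real_inner_comm p q, real_inner_comm q θ]
  field_simp
  ring

theorem isLeast_penalty [CompleteSpace E] (hne : C.Nonempty) (hclosed : IsClosed C)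
    (hconv : Convex ℝ C) (hcone : ∀ x ∈ C, ∀ a : ℝ, 0 ≤ a → a • x ∈ C)
    (hP : IsProjOn (dualCone' C) P) (p θ : E) (hγ : 0 < γ) :
    IsLeast {r : ℝ | ∃ ξ ∈ -C, r = ⟪p, θ - ξ⟫ + γ / 2 * ‖θ - ξ‖ ^ 2}
      ((‖P (p + γ • θ)‖ ^ 2 - ‖p‖ ^ 2) / (2 * γ)) := by
  constructor
  · refine ⟨γ⁻¹ • (p + γ • θ - P (p + γ • θ)), ?_, ?_⟩
    · simpa [Set.mem_neg, ← smul_neg] using hcone _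
        (hP.proj_sub_mem hne hclosed hconv hcone _) γ⁻¹ (inv_nonneg.2 hγ.le)
    · rw [inner_add_half_mul_norm_sq_eq hγ.ne', smul_sub, smul_smul, mul_inv_cancel₀ hγ.ne',
        one_smul]
      congr 4
      abel
  · rintro r ⟨ξ, hξ, rfl⟩
    have hshift : p + γ • (θ - ξ) = p + γ • θ + γ • -ξ := by rw [smul_sub, smul_neg]; abel
    rw [inner_add_half_mul_norm_sq_eq hγ.ne', hshift]
    gcongr
    exact hP.norm_proj_le_norm_add _ (hcone _ hξ γ hγ.le)

theorem isGreatest_dual_penalty (hP : IsProjOn (dualCone' C) P) (p θ : E) (hγ : 0 < γ) :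
    IsGreatest {r : ℝ | ∃ q ∈ dualCone' C, r = ⟪q, θ⟫ - ‖q - p‖ ^ 2 / (2 * γ)}
      ((‖P (p + γ • θ)‖ ^ 2 - ‖p‖ ^ 2) / (2 * γ)) := by
  constructor
  · refine ⟨P (p + γ • θ), (hP _).1, ?_⟩
    rw [inner_sub_norm_sq_div_eq hγ.ne', hP.norm_sq_eq (p + γ • θ)]
    ring
  · rintro r ⟨q, hq, rfl⟩
    rw [inner_sub_norm_sq_div_eq hγ.ne', hP.norm_sq_eq (p + γ • θ)]
    gcongr ?_ / _
    linarith [pow_le_pow_left₀ (norm_nonneg _) ((hP (p + γ • θ)).2 q hq) 2]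

end Objectives

theorem stmt2 {m : ℕ} (C : Set (EuclideanSpace ℝ (Fin m))) (hCne : C.Nonempty)
    (hCclosed : IsClosed C) (hCconv : Convex ℝ C)
    (hCcone : ∀ x ∈ C, ∀ a : ℝ, 0 ≤ a → a • x ∈ C)
    (Proj : EuclideanSpace ℝ (Fin m) → EuclideanSpace ℝ (Fin m))
    (hProj : IsProjOn (dualCone' C) Proj)
    (p θ : EuclideanSpace ℝ (Fin m)) (γ : ℝ) (hγ : 0 < γ) :
    IsLeast {r : ℝ | ∃ ξ ∈ -C, r = ⟪p, θ - ξ⟫ + γ / 2 * ‖θ - ξ‖ ^ 2}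
        ((‖Proj (p + γ • θ)‖ ^ 2 - ‖p‖ ^ 2) / (2 * γ)) ∧
      IsGreatest {r : ℝ | ∃ q ∈ dualCone' C, r = ⟪q, θ⟫ - ‖q - p‖ ^ 2 / (2 * γ)}
        ((‖Proj (p + γ • θ)‖ ^ 2 - ‖p‖ ^ 2) / (2 * γ)) :=
  ⟨isLeast_penalty hCne hCclosed hCconv hCcone hProj p θ hγ, isGreatest_dual_penalty hProj p θ hγ⟩
end

section
/- Let g_0 : R^n → R be convex, g = (g_1,…,g_l) with each g_j : R^n → R convex, Q ∈ R^{m×l} a matrix with nonnegative entries, and ω ∈ R^l a nonnegative vector with ω_j ≥ Σ_{i=1}^m Q_{ij} for each j. Let K_ν^{m+1} = {(x_0, x̄) ∈ R × R^m : x_0 ≥ ‖x̄‖_ν} for ν ≥ 1. Then the mapping Θ(u) = (ω^⊤ g(u) + g_0(u), Q g(u)) is K_ν^{m+1}-convex on R^n, i.e., for all u, v ∈ R^n and α ∈ [0,1], Θ(αu+(1−α)v) − αΘ(u) − (1−α)Θ(v) ∈ −K_ν^{m+1}. -/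
/-- The `ℓ_ν` norm of a finite real vector. -/
noncomputable def lnorm {m : ℕ} (ν : ℝ) (x : Fin m → ℝ) : ℝ :=
  (∑ i, |x i| ^ ν) ^ (1 / ν)

/-- The `ν`-norm cone `K_ν^{m+1} = {(x₀, x̄) : x₀ ≥ ‖x̄‖_ν}` in `ℝ × ℝ^m`. -/
def nuCone {m : ℕ} (ν : ℝ) : Set (ℝ × (Fin m → ℝ)) :=
  {x | lnorm ν x.2 ≤ x.1}

/-!
By convexity the gaps `d_j := α g_j(u) + (1 - α) g_j(v) - g_j(αu + (1 - α)v)` of the `g_j`, and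
the gap `d₀` of `g₀`, are nonnegative, and since `Θ` is linear in `(g₀, g)`,
`αΘ(u) + (1 - α)Θ(v) - Θ(αu + (1 - α)v) = (ωᵀd + d₀, Qd)`. For `ν ≥ 1` the `ℓ_ν` norm is bounded
by the `ℓ_1` norm, and as `Q ≥ 0` and `d ≥ 0`, `‖Qd‖_1 = ∑_j (∑_i Q_ij) d_j ≤ ωᵀd ≤ ωᵀd + d₀`.
-/

open Matrix

theorem sum_rpow_le_rpow_sum {ι : Type*} (s : Finset ι) {a : ι → ℝ} (ha : ∀ i ∈ s, 0 ≤ a i)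
    {p : ℝ} (hp : 1 ≤ p) : ∑ i ∈ s, a i ^ p ≤ (∑ i ∈ s, a i) ^ p := by
  induction s using Finset.cons_induction with
  | empty => simp [Real.zero_rpow (by positivity : p ≠ 0)]
  | cons i s hi ih =>
    simp only [Finset.forall_mem_cons] at ha
    rw [Finset.sum_cons, Finset.sum_cons]
    calc a i ^ p + ∑ j ∈ s, a j ^ p ≤ a i ^ p + (∑ j ∈ s, a j) ^ p := by gcongr; exact ih ha.2
      _ ≤ (a i + ∑ j ∈ s, a j) ^ p :=
        Real.add_rpow_le_rpow_add ha.1 (Finset.sum_nonneg ha.2) hp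

theorem lnorm_le_sum_abs {m : ℕ} {ν : ℝ} (hν : 1 ≤ ν) (x : Fin m → ℝ) :
    lnorm ν x ≤ ∑ i, |x i| := by
  have hs : 0 ≤ ∑ i, |x i| := Finset.sum_nonneg fun i _ => abs_nonneg (x i)
  calc lnorm ν x ≤ ((∑ i, |x i|) ^ ν) ^ (1 / ν) := by
        unfold lnorm
        gcongr
        exact sum_rpow_le_rpow_sum _ (fun i _ => abs_nonneg (x i)) hν
    _ = ∑ i, |x i| := by
        rw [← Real.rpow_mul hs, mul_one_div_cancel (by positivity), Real.rpow_one]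

theorem lnorm_mulVec_le_dotProduct {m : ℕ} {ι : Type*} [Fintype ι] {ν : ℝ} (hν : 1 ≤ ν)
    {Q : Matrix (Fin m) ι ℝ} (hQ : ∀ i j, 0 ≤ Q i j)
    {ω : ι → ℝ} (hωQ : ∀ j, ∑ i, Q i j ≤ ω j) {d : ι → ℝ} (hd : 0 ≤ d) :
    lnorm ν (Q *ᵥ d) ≤ ω ⬝ᵥ d := by
  have hQd : ∀ i, 0 ≤ (Q *ᵥ d) i := fun i => dotProduct_nonneg_of_nonneg (hQ i) hd
  calc lnorm ν (Q *ᵥ d) ≤ ∑ i, |(Q *ᵥ d) i| := lnorm_le_sum_abs hν _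
    _ = ∑ i, (Q *ᵥ d) i := Finset.sum_congr rfl fun i _ => abs_of_nonneg (hQd i)
    _ = ∑ j, (∑ i, Q i j) * d j := by
        simp only [mulVec, dotProduct, Finset.sum_mul]
        exact Finset.sum_comm
    _ ≤ ω ⬝ᵥ d := Finset.sum_le_sum fun j _ => mul_le_mul_of_nonneg_right (hωQ j) (hd j)

theorem mem_nuCone_of_nonneg {m : ℕ} {ι : Type*} [Fintype ι] {ν : ℝ} (hν : 1 ≤ ν)
    {Q : Matrix (Fin m) ι ℝ} (hQ : ∀ i j, 0 ≤ Q i j)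
    {ω : ι → ℝ} (hωQ : ∀ j, ∑ i, Q i j ≤ ω j) {d : ι → ℝ} (hd : 0 ≤ d)
    {d₀ : ℝ} (hd₀ : 0 ≤ d₀) : (ω ⬝ᵥ d + d₀, Q *ᵥ d) ∈ nuCone ν :=
  (lnorm_mulVec_le_dotProduct hν hQ hωQ hd).trans (le_add_of_nonneg_right hd₀)

def convexityGap {E : Type*} [AddCommGroup E] [Module ℝ E] (f : E → ℝ) (u v : E) (α : ℝ) : ℝ :=
  α * f u + (1 - α) * f v - f (α • u + (1 - α) • v)

theorem ConvexOn.convexityGap_nonneg {E : Type*} [AddCommGroup E] [Module ℝ E] {f : E → ℝ}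
    (hf : ConvexOn ℝ Set.univ f) (u v : E) {α : ℝ} (hα0 : 0 ≤ α) (hα1 : α ≤ 1) :
    0 ≤ convexityGap f u v α :=
  sub_nonneg.2 (hf.2 (Set.mem_univ u) (Set.mem_univ v) hα0 (sub_nonneg.2 hα1) (by ring))

theorem stmt3_general {n l m : ℕ} (ν : ℝ) (hν : 1 ≤ ν)
    (g0 : (Fin n → ℝ) → ℝ) (hg0 : ConvexOn ℝ Set.univ g0)
    (g : Fin l → (Fin n → ℝ) → ℝ) (hg : ∀ j, ConvexOn ℝ Set.univ (g j))
    (Q : Matrix (Fin m) (Fin l) ℝ) (hQ : ∀ i j, 0 ≤ Q i j)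
    (ω : Fin l → ℝ) (hωQ : ∀ j, ∑ i, Q i j ≤ ω j)
    (Θ : (Fin n → ℝ) → ℝ × (Fin m → ℝ))
    (hΘ : Θ = fun x => ((∑ j, ω j * g j x) + g0 x, fun i => ∑ j, Q i j * g j x))
    (u v : Fin n → ℝ) (α : ℝ) (hα0 : 0 ≤ α) (hα1 : α ≤ 1) :
    Θ (α • u + (1 - α) • v) - α • Θ u - (1 - α) • Θ v ∈ -nuCone ν := by
  set G : (Fin n → ℝ) → Fin l → ℝ := fun x j => g j x
  set w := α • u + (1 - α) • v
  set d := α • G u + (1 - α) • G v - G w with hd_def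
  have hd : 0 ≤ d := fun j => (hg j).convexityGap_nonneg u v hα0 hα1
  have hΘG : ∀ x, Θ x = (ω ⬝ᵥ G x + g0 x, Q *ᵥ G x) := fun x => by subst hΘ; rfl
  have hΘgap : Θ w - α • Θ u - (1 - α) • Θ v
      = -(ω ⬝ᵥ d + convexityGap g0 u v α, Q *ᵥ d) := by
    simp only [hΘG, hd_def]
    ext1
    · simp only [Prod.fst_sub, Prod.smul_fst, Prod.fst_neg, dotProduct_sub, dotProduct_add,
        dotProduct_smul, smul_eq_mul, convexityGap]
      ring
    · simp only [Prod.snd_sub, Prod.smul_snd, Prod.snd_neg, mulVec_sub, mulVec_add, mulVec_smul]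
      module
  rw [hΘgap, Set.neg_mem_neg]
  exact mem_nuCone_of_nonneg hν hQ hωQ hd (hg0.convexityGap_nonneg u v hα0 hα1)

theorem stmt3 {n l m : ℕ} (ν : ℝ) (hν : 1 ≤ ν)
    (g0 : (Fin n → ℝ) → ℝ) (hg0 : ConvexOn ℝ Set.univ g0)
    (g : Fin l → (Fin n → ℝ) → ℝ) (hg : ∀ j, ConvexOn ℝ Set.univ (g j))
    (Q : Matrix (Fin m) (Fin l) ℝ) (hQ : ∀ i j, 0 ≤ Q i j)
    (ω : Fin l → ℝ) (hω : ∀ j, 0 ≤ ω j) (hωQ : ∀ j, ∑ i, Q i j ≤ ω j)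
    (Θ : (Fin n → ℝ) → ℝ × (Fin m → ℝ))
    (hΘ : Θ = fun x => ((∑ j, ω j * g j x) + g0 x, fun i => ∑ j, Q i j * g j x))
    (u v : Fin n → ℝ) (α : ℝ) (hα0 : 0 ≤ α) (hα1 : α ≤ 1) :
    Θ (α • u + (1 - α) • v) - α • Θ u - (1 - α) • Θ v ∈ -nuCone ν :=
  stmt3_general ν hν g0 hg0 g hg Q hQ ω hωQ Θ hΘ u v α hα0 hα1
end

section
/- Let U ⊂ R^n be closed convex, G convex differentiable, J convex lower semicontinuous, C a closed convex cone with dual cone C*, Ω a differentiable C-convex mapping, Φ a C-convex mapping, and q ∈ C*. Suppose u⁺ minimizes over u ∈ U the function ⟨∇G(u^k), u⟩ + J(u) + ⟨q, ∇Ω(u^k)u + Φ(u)⟩ + (1/ε)D(u, u^k), where D is the Bregman distance of a strongly convex differentiable K. Then for every u ∈ U: ε[L(u⁺, q) − L(u, q)] ≤ D(u, u^k) − D(u, u⁺) − D(u⁺, u^k) + ε[G(u⁺) − G(u^k) − ⟨∇G(u^k), u⁺ − u^k⟩] + ε⟨q, Ω(u⁺) − Ω(u^k) − ∇Ω(u^k)(u⁺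 − u^k)⟩, where L(u,p) = (G+J)(u) + ⟨p, Ω(u)+Φ(u)⟩. -/
/-!
Put `H v = ⟪∇G(uᵏ), v⟫ + J v + ⟪q, Ω'(uᵏ) v + Φ v⟫`, which is convex because `q ∈ C*` turns
`C`-convexity of `Φ` into convexity of `⟪q, Φ ·⟫`. Since `u⁺` minimises `H + ε⁻¹ D(·, uᵏ)` over the
convex set `U`, the variational inequality gives
`ε (H u⁺ - H u) ≤ ⟪∇K(u⁺) - ∇K(uᵏ), u - u⁺⟫`, and the three-point identity rewrites the right-hand
side as `D(u, uᵏ) - D(u, u⁺) - D(u⁺, uᵏ)`. The gradient inequalities for the convex functions `G`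
and `⟪q, Ω ·⟫` at `uᵏ` then replace the linearisations in `H` by `G` and `⟪q, Ω ·⟫`, at the cost
of the two remainder terms.
-/

open scoped RealInnerProductSpace

/-- Bregman distance associated with a differentiable function `K`. -/
noncomputable def breg {E : Type*} [NormedAddCommGroup E] [InnerProductSpace ℝ E]
    [CompleteSpace E] (K : E → ℝ) (u v : E) : ℝ :=
  K u - K v - ⟪gradient K v, u - v⟫

open Set

section FirstOrder

variable {E : Type*} [NormedAddCommGroup E] [NormedSpace ℝ E]

theorem IsMinOn.sub_le_of_convexOn_add {F g : E → ℝ} {g' : E →L[ℝ] ℝ} {U : Set E} {x y : E}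
    (hmin : IsMinOn (F + g) U x) (hF : ConvexOn ℝ U F) (hg : HasFDerivAt g g' x)
    (hx : x ∈ U) (hy : y ∈ U) : F x - F y ≤ g' (y - x) := by
  -- convexity of `F` makes `k` minimal at `0` on `[0, 1]`
  set k : ℝ → ℝ := fun t => g (x + t • (y - x)) + t * (F y - F x)
  have hk : HasDerivAt k (g' (y - x) + (F y - F x)) 0 := by
    have hline : HasDerivAt (fun t : ℝ => x + t • (y - x)) (y - x) 0 := by
      simpa using ((hasDerivAt_id (0 : ℝ)).smul_const (y - x)).const_add x
    exact (hg.comp_hasDerivAt_of_eq 0 hline (by simp)).add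
      ((hasDerivAt_id (0 : ℝ)).mul_const _ |>.congr_deriv (one_mul _))
  have hkmin : IsMinOn k (Icc 0 1) 0 := by
    refine isMinOn_iff.2 fun t ⟨ht0, ht1⟩ => ?_
    have hxt : x + t • (y - x) = (1 - t) • x + t • y := by module
    have hmem : x + t • (y - x) ∈ U := hxt ▸ hF.1 hx hy (by linarith) ht0 (by ring)
    have hconv := hF.2 hx hy (by linarith : 0 ≤ 1 - t) ht0 (by ring)
    have hle : F x + g x ≤ F (x + t • (y - x)) + g (x + t • (y - x)) :=
      isMinOn_iff.1 hmin _ hmem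
    rw [← hxt, smul_eq_mul, smul_eq_mul] at hconv
    simp only [k, zero_smul, add_zero, zero_mul]
    nlinarith
  have hone : (1 : ℝ) ∈ posTangentConeAt (Icc 0 1) 0 :=
    mem_posTangentConeAt_of_segment_subset (by simp [segment_eq_Icc])
  have := hkmin.localize.hasFDerivWithinAt_nonneg hk.hasFDerivAt.hasFDerivWithinAt hone
  rw [ContinuousLinearMap.toSpanSingleton_apply, one_smul] at this
  linarith

theorem ConvexOn.apply_sub_le_of_hasFDerivAt {f : E → ℝ} {f' : E →L[ℝ] ℝ} {U : Set E} {x y : E}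
    (hf : ConvexOn ℝ U f) (hf' : HasFDerivAt f f' x) (hx : x ∈ U) (hy : y ∈ U) :
    f' (y - x) ≤ f y - f x := by
  have hmin : IsMinOn (f + fun z => -f z) U x := fun z _ => by simp
  have := hmin.sub_le_of_convexOn_add hf hf'.neg hx hy
  simp only [neg_apply] at this
  linarith

end FirstOrder

def ConeConvex {E F : Type*} [AddCommGroup E] [Module ℝ E] [AddCommGroup F] [Module ℝ F]
    (C : Set F) (Φ : E → F) : Prop :=
  ∀ u v : E, ∀ α : ℝ, 0 ≤ α → α ≤ 1 → -(Φ (α • u + (1 - α) • v) - α • Φ u - (1 - α) • Φ v) ∈ C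

theorem ConeConvex.convexOn_inner {E F : Type*} [AddCommGroup E] [Module ℝ E]
    [NormedAddCommGroup F] [InnerProductSpace ℝ F] {C : Set F} {Φ : E → F}
    (hΦ : ConeConvex C Φ) {q : F} (hq : q ∈ dualCone' C) :
    ConvexOn ℝ univ fun v => ⟪q, Φ v⟫ := by
  refine ⟨convex_univ, fun u _ v _ a b ha hb hab => ?_⟩
  obtain rfl : b = 1 - a := by linarith
  have := hq _ (hΦ u v a ha (by linarith))
  rw [real_inner_comm, inner_neg_right, inner_sub_right, inner_sub_right, real_inner_smul_right,
    real_inner_smul_right] at this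
  simp only [smul_eq_mul]
  linarith

section Bregman

variable {E : Type*} [NormedAddCommGroup E] [InnerProductSpace ℝ E] [CompleteSpace E]

theorem breg_three_point (K : E → ℝ) (u v w : E) :
    breg K u w - breg K u v - breg K v w = ⟪gradient K v - gradient K w, u - v⟫ := by
  simp only [breg, inner_sub_left, inner_sub_right]
  ring

theorem hasGradientAt_breg_left {K : E → ℝ} {v : E} (hK : DifferentiableAt ℝ K v) (w : E) :
    HasGradientAt (fun x => breg K x w) (gradient K v - gradient K w) v := by
  rw [hasGradientAt_iff_hasFDerivAt, map_sub]
  have hbreg : (fun x => breg K x w) =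
      fun x => K x - (K w - ⟪gradient K w, w⟫) - InnerProductSpace.toDual ℝ E (gradient K w) x := by
    ext x
    simp only [breg, InnerProductSpace.toDual_apply_apply, inner_sub_right]
    ring
  rw [hbreg]
  exact (hK.hasGradientAt.hasFDerivAt.sub_const _).sub (ContinuousLinearMap.hasFDerivAt _)

end Bregman

theorem stmt15_general {n m : ℕ}
    (U : Set (EuclideanSpace ℝ (Fin n))) (hUconv : Convex ℝ U)
    (G : EuclideanSpace ℝ (Fin n) → ℝ) (hGconv : ConvexOn ℝ Set.univ G)
    (hGdiff : Differentiable ℝ G)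
    (J : EuclideanSpace ℝ (Fin n) → ℝ) (hJconv : ConvexOn ℝ Set.univ J)
    (C : Set (EuclideanSpace ℝ (Fin m)))
    (Ω : EuclideanSpace ℝ (Fin n) → EuclideanSpace ℝ (Fin m)) (hΩdiff : Differentiable ℝ Ω)
    (hΩconv : ∀ u v : EuclideanSpace ℝ (Fin n), ∀ α : ℝ, 0 ≤ α → α ≤ 1 →
      -(Ω (α • u + (1 - α) • v) - α • Ω u - (1 - α) • Ω v) ∈ C)
    (Φ : EuclideanSpace ℝ (Fin n) → EuclideanSpace ℝ (Fin m))
    (hΦconv : ∀ u v : EuclideanSpace ℝ (Fin n), ∀ α : ℝ, 0 ≤ α → α ≤ 1 →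
      -(Φ (α • u + (1 - α) • v) - α • Φ u - (1 - α) • Φ v) ∈ C)
    (q : EuclideanSpace ℝ (Fin m)) (hq : q ∈ dualCone' C)
    (K : EuclideanSpace ℝ (Fin n) → ℝ)
    (hKdiff : Differentiable ℝ K)
    (ε : ℝ) (hε : 0 < ε)
    (uk uplus : EuclideanSpace ℝ (Fin n)) (huplus : uplus ∈ U)
    (hmin : ∀ u ∈ U,
      ⟪gradient G uk, uplus⟫ + J uplus + ⟪q, fderiv ℝ Ω uk uplus + Φ uplus⟫ +
          (1 / ε) * breg K uplus uk ≤
        ⟪gradient G uk, u⟫ + J u + ⟪q, fderiv ℝ Ω uk u + Φ u⟫ + (1 / ε) * breg K u uk) :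
    ∀ u ∈ U,
      ε * ((G uplus + J uplus + ⟪q, Ω uplus + Φ uplus⟫) -
            (G u + J u + ⟪q, Ω u + Φ u⟫)) ≤
        breg K u uk - breg K u uplus - breg K uplus uk +
          ε * (G uplus - G uk - ⟪gradient G uk, uplus - uk⟫) +
          ε * ⟪q, Ω uplus - Ω uk - fderiv ℝ Ω uk (uplus - uk)⟫ := by
  intro u hu
  have hΦq : ConvexOn ℝ univ fun v => ⟪q, Φ v⟫ := ConeConvex.convexOn_inner hΦconv hq
  have hΩq : ConvexOn ℝ univ fun v => ⟪q, Ω v⟫ := ConeConvex.convexOn_inner hΩconv hq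
  set H := fun v => ⟪gradient G uk, v⟫ + J v + ⟪q, fderiv ℝ Ω uk v + Φ v⟫ with hH
  have hHconv : ConvexOn ℝ U H := by
    have hlin := (innerSL ℝ (gradient G uk) +
      (innerSL ℝ q).comp (fderiv ℝ Ω uk)).toLinearMap.convexOn convex_univ
    refine (((hlin.add hJconv).add hΦq).subset (subset_univ U) hUconv).congr fun v _ => ?_
    simp only [hH, Pi.add_apply, ContinuousLinearMap.coe_coe, add_apply,
      ContinuousLinearMap.comp_apply, innerSL_apply_apply, inner_add_right]
    ring
  have hvi := (isMinOn_iff.2 hmin).sub_le_of_convexOn_add hHconv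
    ((hasGradientAt_breg_left (hKdiff uplus) uk).hasFDerivAt.const_mul (1 / ε)) huplus hu
  rw [smul_apply, InnerProductSpace.toDual_apply_apply, ← breg_three_point, smul_eq_mul] at hvi
  have hεvi : ε * (H uplus - H u) ≤ breg K u uk - breg K u uplus - breg K uplus uk := by
    calc _ ≤ ε * (1 / ε * (breg K u uk - breg K u uplus - breg K uplus uk)) :=
          mul_le_mul_of_nonneg_left hvi hε.le
      _ = _ := by field_simp
  have hG := hGconv.apply_sub_le_of_hasFDerivAt (hGdiff uk).hasGradientAt.hasFDerivAt
    (mem_univ uk) (mem_univ u)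
  have hΩ := hΩq.apply_sub_le_of_hasFDerivAt
    ((innerSL ℝ q).hasFDerivAt.comp uk (hΩdiff uk).hasFDerivAt) (mem_univ uk) (mem_univ u)
  rw [InnerProductSpace.toDual_apply_apply] at hG
  rw [ContinuousLinearMap.comp_apply, innerSL_apply_apply] at hΩ
  have hL : G uplus + J uplus + ⟪q, Ω uplus + Φ uplus⟫ - (G u + J u + ⟪q, Ω u + Φ u⟫) ≤
      H uplus - H u + (G uplus - G uk - ⟪gradient G uk, uplus - uk⟫) +
        ⟪q, Ω uplus - Ω uk - fderiv ℝ Ω uk (uplus - uk)⟫ := by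
    simp only [hH, inner_add_right, inner_sub_right, map_sub] at hG hΩ ⊢
    linarith
  linarith [mul_le_mul_of_nonneg_left hL hε.le]

theorem stmt15 {n m : ℕ}
    (U : Set (EuclideanSpace ℝ (Fin n))) (hUclosed : IsClosed U) (hUconv : Convex ℝ U)
    (G : EuclideanSpace ℝ (Fin n) → ℝ) (hGconv : ConvexOn ℝ Set.univ G)
    (hGdiff : Differentiable ℝ G)
    (J : EuclideanSpace ℝ (Fin n) → ℝ) (hJconv : ConvexOn ℝ Set.univ J)
    (hJlsc : LowerSemicontinuous J)
    (C : Set (EuclideanSpace ℝ (Fin m))) (hCne : C.Nonempty) (hCclosed : IsClosed C)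
    (hCconv : Convex ℝ C) (hCcone : ∀ x ∈ C, ∀ a : ℝ, 0 ≤ a → a • x ∈ C)
    (Ω : EuclideanSpace ℝ (Fin n) → EuclideanSpace ℝ (Fin m)) (hΩdiff : Differentiable ℝ Ω)
    (hΩconv : ∀ u v : EuclideanSpace ℝ (Fin n), ∀ α : ℝ, 0 ≤ α → α ≤ 1 →
      -(Ω (α • u + (1 - α) • v) - α • Ω u - (1 - α) • Ω v) ∈ C)
    (Φ : EuclideanSpace ℝ (Fin n) → EuclideanSpace ℝ (Fin m))
    (hΦconv : ∀ u v : EuclideanSpace ℝ (Fin n), ∀ α : ℝ, 0 ≤ α → α ≤ 1 →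
      -(Φ (α • u + (1 - α) • v) - α • Φ u - (1 - α) • Φ v) ∈ C)
    (q : EuclideanSpace ℝ (Fin m)) (hq : q ∈ dualCone' C)
    (K : EuclideanSpace ℝ (Fin n) → ℝ) (β : ℝ) (hβ : 0 < β)
    (hKdiff : Differentiable ℝ K)
    (hKsc : ConvexOn ℝ Set.univ (fun u => K u - β / 2 * ‖u‖ ^ 2))
    (ε : ℝ) (hε : 0 < ε)
    (uk uplus : EuclideanSpace ℝ (Fin n)) (huk : uk ∈ U) (huplus : uplus ∈ U)
    (hmin : ∀ u ∈ U,
      ⟪gradient G uk, uplus⟫ + J uplus + ⟪q, fderiv ℝ Ω uk uplus + Φ uplus⟫ +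
          (1 / ε) * breg K uplus uk ≤
        ⟪gradient G uk, u⟫ + J u + ⟪q, fderiv ℝ Ω uk u + Φ u⟫ + (1 / ε) * breg K u uk) :
    ∀ u ∈ U,
      ε * ((G uplus + J uplus + ⟪q, Ω uplus + Φ uplus⟫) -
            (G u + J u + ⟪q, Ω u + Φ u⟫)) ≤
        breg K u uk - breg K u uplus - breg K uplus uk +
          ε * (G uplus - G uk - ⟪gradient G uk, uplus - uk⟫) +
          ε * ⟪q, Ω uplus - Ω uk - fderiv ℝ Ω uk (uplus - uk)⟫ :=
  stmt15_general U hUconv G hGconv hGdiff J hJconv C Ω hΩdiff hΩconv Φ hΦconv q hq K hKdiff ε hε uk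
    uplus huplus hmin
end
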